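/- Let X and Z be jointly distributed random variables on finite sets, suppose the support of Z has size at most 2^m, and let t > 0. Then Pr_{z←Z}[ H_∞(X | Z=z) ≤ H_∞(X) − m − t ] ≤ 2^{−t}, where H_∞(X | Z=z) denotes the min-entropy of the conditional distribution of X given Z = z. -/
import Mathlib


open Finset

/-- Min-entropy of a distribution on a finite set: `-log₂ (max_ω p ω)`. -/
noncomputable def minEntropy {Ω : Type*} [Fintype Ω] (p : Ω → ℝ) : ℝ :=
  - Real.logb 2 (⨆ ω, p ω)

/-- Marginal of the first component of a joint distribution. -/
noncomputable def margX {A B : Type*} [Fintype B] (p : A × B → ℝ) : A → ℝ :=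
  fun a => ∑ b, p (a, b)

/-- Marginal of the second component of a joint distribution. -/
noncomputable def margZ {A B : Type*} [Fintype A] (p : A × B → ℝ) : B → ℝ :=
  fun b => ∑ a, p (a, b)

/-- If the support of `Z` has size at most `2^m`, then except with probability `2^(-t)`
over `z ← Z`, the conditional min-entropy `H_∞(X | Z = z)` exceeds `H_∞(X) - m - t`. -/
theorem condMinEntropy_drop_unlikely
    (A B : Type*) [Fintype A] [Fintype B] [Nonempty A] [Nonempty B]
    (p : A × B → ℝ) (hp0 : ∀ w, 0 ≤ p w) (hp1 : ∑ w, p w = 1)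
    (m t : ℝ) (ht : 0 < t)
    (hsupp : (((Finset.univ : Finset B).filter (fun b => margZ p b ≠ 0)).card : ℝ) ≤
      (2 : ℝ) ^ m) :
    ∑ z ∈ (Finset.univ : Finset B).filter (fun z =>
        minEntropy (fun a : A => p (a, z) / margZ p z) ≤ minEntropy (margX p) - m - t),
      margZ p z ≤ (2 : ℝ) ^ (-t) := by
  classical
  have two_pos : (0:ℝ) < 2 := by norm_num
  set P : ℝ := ⨆ a, margX p a with hPdef
  have hbdd : ∀ (f : A → ℝ), BddAbove (Set.range f) :=
    fun f => (Set.finite_range f).bddAbove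
  have hmX : ∀ a, 0 ≤ margX p a := fun a => Finset.sum_nonneg fun b _ => hp0 _
  have hmZ : ∀ b, 0 ≤ margZ p b := fun b => Finset.sum_nonneg fun a _ => hp0 _
  have hsum : ∑ a, margX p a = 1 := by
    rw [← hp1, Fintype.sum_prod_type]; rfl
  have hPub : ∀ a, margX p a ≤ P := fun a => le_ciSup (hbdd _) a
  have hPpos : 0 < P := by
    by_contra h
    push_neg at h
    have : ∑ a, margX p a ≤ 0 :=
      Finset.sum_nonpos fun a _ => le_trans (hPub a) h
    linarith [hsum]
  have hpleP : ∀ a b, p (a, b) ≤ P := by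
    intro a b
    refine le_trans ?_ (hPub a)
    exact Finset.single_le_sum (fun b _ => hp0 (a, b)) (Finset.mem_univ b)
  -- pointwise bound on bad z with nonzero marginal
  have key : ∀ z, minEntropy (fun a : A => p (a, z) / margZ p z) ≤ minEntropy (margX p) - m - t →
      margZ p z ≠ 0 → margZ p z ≤ (2:ℝ) ^ (-(m + t)) := by
    intro z hbad hz
    have hc : 0 < margZ p z := lt_of_le_of_ne (hmZ z) (Ne.symm hz)
    set M : ℝ := ⨆ a, p (a, z) / margZ p z with hMdef
    obtain ⟨a₀, ha₀⟩ : ∃ a, p (a, z) ≠ 0 := by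
      by_contra h
      push_neg at h
      exact hz (by simp [margZ, h])
    have ha₀pos : 0 < p (a₀, z) := lt_of_le_of_ne (hp0 _) (Ne.symm ha₀)
    have hMpos : 0 < M := lt_of_lt_of_le (div_pos ha₀pos hc)
      (le_ciSup (hbdd fun a => p (a, z) / margZ p z) a₀)
    have hMle : M ≤ P / margZ p z :=
      ciSup_le fun a => by gcongr; exact hpleP a z
    -- from hbad : -logb 2 M ≤ -logb 2 P - m - t
    have hlog : Real.logb 2 P + (m + t) ≤ Real.logb 2 M := by
      have := hbad
      simp only [minEntropy, hMdef, hPdef] at this ⊢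
      linarith
    have hPMT : P * (2:ℝ) ^ (m + t) ≤ M := by
      have h1 : Real.logb 2 (P * (2:ℝ) ^ (m + t)) ≤ Real.logb 2 M := by
        rw [Real.logb_mul (ne_of_gt hPpos) (ne_of_gt (Real.rpow_pos_of_pos two_pos _)),
          Real.logb_rpow two_pos (by norm_num)]
        exact hlog
      exact (Real.logb_le_logb (by norm_num)
        (mul_pos hPpos (Real.rpow_pos_of_pos two_pos _)) hMpos).mp h1
    have hXpos : (0:ℝ) < (2:ℝ) ^ (m + t) := Real.rpow_pos_of_pos two_pos _
    have h2 : margZ p z * (P * (2:ℝ) ^ (m + t)) ≤ P := by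
      have := hPMT.trans hMle
      rw [le_div_iff₀ hc] at this
      linarith
    have h3 : margZ p z ≤ P / (P * (2:ℝ) ^ (m + t)) :=
      (le_div_iff₀ (mul_pos hPpos hXpos)).mpr h2
    calc margZ p z ≤ P / (P * (2:ℝ) ^ (m + t)) := h3
      _ = (2:ℝ) ^ (-(m + t)) := by
          rw [Real.rpow_neg (le_of_lt two_pos)]
          field_simp
  set bad := (Finset.univ : Finset B).filter (fun z =>
      minEntropy (fun a : A => p (a, z) / margZ p z) ≤ minEntropy (margX p) - m - t) with hbaddef
  have hsplit : ∑ z ∈ bad, margZ p z = ∑ z ∈ bad.filter (fun z => margZ p z ≠ 0), margZ p z := by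
    exact (Finset.sum_filter_of_ne (fun z _ hz => hz)).symm
  rw [hsplit]
  have hcard : ((bad.filter (fun z => margZ p z ≠ 0)).card : ℝ) ≤ (2:ℝ) ^ m := by
    refine le_trans ?_ hsupp
    exact_mod_cast Finset.card_le_card (by
      intro z hzmem
      simp only [Finset.mem_filter] at hzmem ⊢
      exact ⟨Finset.mem_univ z, hzmem.2⟩)
  calc ∑ z ∈ bad.filter (fun z => margZ p z ≠ 0), margZ p z
      ≤ ∑ _z ∈ bad.filter (fun z => margZ p z ≠ 0), (2:ℝ) ^ (-(m + t)) := by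
        refine Finset.sum_le_sum fun z hzmem => ?_
        simp only [hbaddef, Finset.mem_filter, Finset.mem_univ, true_and] at hzmem
        exact key z hzmem.1 hzmem.2
    _ = ((bad.filter (fun z => margZ p z ≠ 0)).card : ℝ) * (2:ℝ) ^ (-(m + t)) := by
        rw [Finset.sum_const, nsmul_eq_mul]
    _ ≤ (2:ℝ) ^ m * (2:ℝ) ^ (-(m + t)) := by
        exact mul_le_mul_of_nonneg_right hcard (le_of_lt (Real.rpow_pos_of_pos two_pos _))
    _ = (2:ℝ) ^ (-t) := by
        rw [← Real.rpow_add two_pos]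
        ring_nf
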